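/- arXiv:2012.00200 — 2 statements merged into one kernel-verified Lean document; each statement's English description precedes it below -/
import Mathlib

section
/- Let φ : ℝ → ℝ be convex, let U₀ : ℝ → ℝ, and for x ∈ ℝ define Ψ(x) as the supremum of the set of maximizers {y : U₀(y) - φ(y - x) = sup_z (U₀(z) - φ(z - x))}, assuming for each x the supremum of U₀(z) - φ(z - x) is attained and Ψ(x) is finite. Then Ψ is non-decreasing: for x₁ ≤ x₂ one has Ψ(x₁) ≤ Ψ(x₂). -/
/-- The set of maximizers of `z ↦ U₀ z - φ (z - x)`. -/
def maximizerSet (U₀ φ : ℝ → ℝ) (x : ℝ) : Set ℝ :=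
  {y | ∀ z, U₀ z - φ (z - x) ≤ U₀ y - φ (y - x)}

section Increments

variable {𝕜 : Type*} [Field 𝕜] [LinearOrder 𝕜] [IsStrictOrderedRing 𝕜] {s : Set 𝕜} {f : 𝕜 → 𝕜}

theorem ConvexOn.map_add_sub_map_le_map_add_sub_map (hf : ConvexOn 𝕜 s f) {u v d : 𝕜}
    (hu : u ∈ s) (hvd : v + d ∈ s) (huv : u ≤ v) (hd : 0 ≤ d) :
    f (u + d) - f u ≤ f (v + d) - f v := by
  rcases hd.eq_or_lt with rfl | hd
  · simp
  have hs := hf.1.ordConnected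
  have hud : u + d ∈ s := hs.out hu hvd ⟨by linarith, by linarith⟩
  have hv : v ∈ s := hs.out hu hvd ⟨huv, by linarith⟩
  have hslope : slope f u (u + d) ≤ slope f v (v + d) :=
    calc slope f u (u + d)
        ≤ slope f u (v + d) :=
          hf.slope_mono hu ⟨hud, by simp [hd.ne']⟩
            ⟨hvd, by rw [Set.mem_singleton_iff]; linarith⟩ (by linarith)
      _ = slope f (v + d) u := slope_comm f _ _
      _ ≤ slope f (v + d) v :=
          hf.slope_mono hvd ⟨hu, by rw [Set.mem_singleton_iff]; linarith⟩
            ⟨hv, by simp [hd.ne']⟩ huv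
      _ = slope f v (v + d) := slope_comm f _ _
  simpa [slope_def_field, div_le_div_iff_of_pos_right hd] using hslope

end Increments

/-- By convexity `z ↦ φ (z - x₁) - φ (z - x₂)` is nondecreasing, so moving the tilt from `x₁` to
`x₂` favours `b` over `y` at least as much as it did at `x₁`. -/
theorem mem_maximizerSet_of_le {U₀ φ : ℝ → ℝ} (hφ : ConvexOn ℝ Set.univ φ) {x₁ x₂ y b : ℝ}
    (hx : x₁ ≤ x₂) (hyb : y ≤ b) (hb : b ∈ maximizerSet U₀ φ x₁)
    (hy : y ∈ maximizerSet U₀ φ x₂) : b ∈ maximizerSet U₀ φ x₂ := by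
  have hincr : φ (y - x₁) - φ (y - x₂) ≤ φ (b - x₁) - φ (b - x₂) := by
    have := hφ.map_add_sub_map_le_map_add_sub_map (Set.mem_univ (y - x₂))
      (Set.mem_univ (b - x₂ + (x₂ - x₁))) (by linarith : y - x₂ ≤ b - x₂)
      (by linarith : (0 : ℝ) ≤ x₂ - x₁)
    simpa only [sub_add_sub_cancel] using this
  intro z
  linarith [hy z, hb y]

/-- the rightmost-maximizer process `Ψ` is non-decreasing. -/
theorem psi_monotone (φ U₀ Ψ : ℝ → ℝ)
    (hφ : ConvexOn ℝ Set.univ φ)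
    (hmem : ∀ x, Ψ x ∈ maximizerSet U₀ φ x)
    (hsup : ∀ x, IsLUB (maximizerSet U₀ φ x) (Ψ x)) :
    ∀ x₁ x₂ : ℝ, x₁ ≤ x₂ → Ψ x₁ ≤ Ψ x₂ := by
  intro x₁ x₂ hx
  by_contra! hlt
  exact hlt.not_ge <| (hsup x₂).1 <| mem_maximizerSet_of_le hφ hx hlt.le (hmem x₁) (hmem x₂)
end

section
/- Let φ : ℝ → ℝ be C¹ and strictly convex with |φ'(y)| → ∞ as |y| → ∞, and let U₀ : ℝ → ℝ satisfy U₀(y)/φ(y) → 0 as |y| → ∞. Fix M ≥ 1. Then there is no sequence (aₙ) with aₙ → +∞ and points λₙ ∈ [0,1] such that U₀(λₙ) - φ(λₙ - aₙ) ≥ U₀(y) - φ(y - aₙ) for all y ∈ ℝ. -/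
open Filter

/-- no maximizers in `[0,1]` for arbitrarily large shifts: if `φ` is `C¹`,
strictly convex with `φ'(y) → ±∞` as `y → ±∞`, and `U₀(y)/φ(y) → 0` as `|y| → ∞`,
then there is no sequence `aₙ → +∞` with points `λₙ ∈ [0,1]` maximizing
`y ↦ U₀(y) - φ(y - aₙ)`. -/
theorem no_faraway_maximizers (φ φ' U₀ : ℝ → ℝ) (M : ℝ) (hM : (1 : ℝ) ≤ M)
    (hφconv : StrictConvexOn ℝ Set.univ φ)
    (hφderiv : ∀ x, HasDerivAt φ (φ' x) x)
    (hφ'top : Tendsto φ' atTop atTop) (hφ'bot : Tendsto φ' atBot atBot)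
    (hUtop : Tendsto (fun y => U₀ y / φ y) atTop (nhds 0))
    (hUbot : Tendsto (fun y => U₀ y / φ y) atBot (nhds 0)) :
    ¬ ∃ (a lam : ℕ → ℝ),
        Tendsto a atTop atTop ∧
        (∀ n, lam n ∈ Set.Icc (0 : ℝ) 1) ∧
        (∀ n, ∀ y : ℝ, U₀ y - φ (y - a n) ≤ U₀ (lam n) - φ (lam n - a n)) := by
  rintro ⟨a, lam, ha, hlam, hmax⟩
  have hconv : ConvexOn ℝ Set.univ φ := hφconv.convexOn
  have hφcont : Continuous φ :=
    Differentiable.continuous (fun x => (hφderiv x).differentiableAt)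
  -- tangent line inequality: for x < v, φ v + φ' v * (x - v) ≤ φ x
  have tangent : ∀ x v : ℝ, x < v → φ v + φ' v * (x - v) ≤ φ x := by
    intro x v hxv
    have hs : slope φ x v ≤ φ' v :=
      hconv.slope_le_of_hasDerivAt (Set.mem_univ x) (Set.mem_univ v) hxv (hφderiv v)
    rw [slope_def_field, div_le_iff₀ (by linarith)] at hs
    nlinarith
  -- uniform upper bound on φ (lam n - a 0) by compactness
  obtain ⟨z, -, hz⟩ :=
    (isCompact_Icc (a := -a 0) (b := 1 - a 0)).exists_isMaxOn
      (Set.nonempty_Icc.2 (by linarith)) hφcont.continuousOn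
  set B : ℝ := φ z with hB
  have hφB : ∀ n, φ (lam n - a 0) ≤ B := by
    intro n
    have h := (hlam n)
    exact hz ⟨by simp [Set.mem_Icc] at h ⊢; linarith [h.1], by
      have := h.2; simp [Set.mem_Icc] at h ⊢; linarith [h.2]⟩
  -- uniform upper bound on U₀ (lam n)
  have hK : ∀ n, U₀ (lam n) ≤ U₀ (lam 0) - φ (lam 0 - a 0) + B := by
    intro n
    have h := hmax 0 (lam n)
    have := hφB n
    linarith
  set K : ℝ := U₀ (lam 0) - φ (lam 0 - a 0) + B with hKdef
  -- eventually φ'(2 - a n) is very negative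
  have htb : Tendsto (fun n => φ' (2 - a n)) atTop atBot :=
    hφ'bot.comp (tendsto_atBot_add_const_left _ 2 (tendsto_neg_atBot_iff.2 ha))
  have hev : ∀ᶠ n in atTop, φ' (2 - a n) < min 0 (U₀ 2 - K) :=
    htb.eventually (eventually_lt_atBot _)
  obtain ⟨n, hn⟩ := hev.exists
  have hn0 : φ' (2 - a n) < 0 := lt_of_lt_of_le hn (min_le_left _ _)
  have hnK : φ' (2 - a n) < U₀ 2 - K := lt_of_lt_of_le hn (min_le_right _ _)
  -- tangent inequality at v = 2 - a n, x = lam n - a n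
  have hxv : lam n - a n < 2 - a n := by
    have := (hlam n).2; linarith
  have htan := tangent (lam n - a n) (2 - a n) hxv
  -- lam n - a n - (2 - a n) = lam n - 2 ∈ [-2, -1]
  have hle : -φ' (2 - a n) ≤ φ' (2 - a n) * (lam n - a n - (2 - a n)) := by
    have h1 : lam n - a n - (2 - a n) = lam n - 2 := by ring
    rw [h1]
    nlinarith [(hlam n).2, hn0.le]
  -- maximizer inequality at y = 2
  have hm := hmax n 2
  have hKn := hK n
  -- combine
  nlinarith
end
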